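/- arXiv:1312.5431 — 2 statements merged into one kernel-verified Lean document; each statement's English description precedes it below -/
import Mathlib

section
/- Let Γ be a finitely generated group, μ a finitely supported symmetric generating probability measure on Γ, and Δ_μ the associated Laplacian element. For every hermitian element ξ of the augmentation ideal I[Γ], the following are equivalent: (1) ξ + εΔ_μ ∈ Σ²I[Γ] for every ε > 0; (2) ξ + ε1 ∈ Σ²ℝ[Γ] for every ε > 0. (That is, the closure of Σ²I[Γ] equals I[Γ] ∩ closure(Σ²ℝ[Γ]).) -/
open MonoidAlgebra Finset RealInnerProductSpace

/-- The involution `ξ*(x) = ξ(x⁻¹)` on the real group algebra `ℝ[Γ]`. -/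
def astar {Γ : Type*} [Group Γ] (ξ : MonoidAlgebra ℝ Γ) : MonoidAlgebra ℝ Γ :=
  MonoidAlgebra.ofCoeff (Finsupp.equivMapDomain (Equiv.inv Γ) ξ.coeff)

/-- The augmentation character `ℝ[Γ] → ℝ`, `ξ ↦ Σ_x ξ(x)`. -/
noncomputable def aug (Γ : Type*) [Group Γ] : MonoidAlgebra ℝ Γ →ₐ[ℝ] ℝ :=
  MonoidAlgebra.lift ℝ ℝ Γ 1

/-- The augmentation ideal `I[Γ] = {ξ ∈ ℝ[Γ] : Σ_x ξ(x) = 0}`, as an `ℝ`-submodule. -/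
noncomputable def augIdeal (Γ : Type*) [Group Γ] : Submodule ℝ (MonoidAlgebra ℝ Γ) :=
  LinearMap.ker (aug Γ).toLinearMap

/-- `Σ²ℝ[Γ]`, the set of finite sums of hermitian squares in `ℝ[Γ]`. -/
def SOS (Γ : Type*) [Group Γ] : Set (MonoidAlgebra ℝ Γ) :=
  {ξ | ∃ (n : ℕ) (f : Fin n → MonoidAlgebra ℝ Γ), ξ = ∑ i, astar (f i) * f i}

/-- `Σ²I[Γ]`, the set of finite sums of hermitian squares of elements of `I[Γ]`. -/
def SOSI (Γ : Type*) [Group Γ] : Set (MonoidAlgebra ℝ Γ) :=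
  {ξ | ∃ (n : ℕ) (f : Fin n → MonoidAlgebra ℝ Γ),
    (∀ i, f i ∈ augIdeal Γ) ∧ ξ = ∑ i, astar (f i) * f i}

/-!
Hermitian elements of `I[Γ]` are real combinations of the squares `(1 - x)* (1 - x)`, and since
`supp μ` generates `Γ`, each of these lies below a multiple of `Δ_μ` in the order defined by
`Σ²I[Γ]`: `Δ_μ` is an order unit. If `ξ + ε Δ_μ ∉ Σ²I[Γ]`, the Riesz extension theorem gives a
functional `ψ ≥ 0` on `Σ²I[Γ]` with `ψ Δ_μ = 1` and `ψ (ξ + ε Δ_μ) ≤ 0`. Then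
`ℓ x = ψ ((1 - x)* (1 - x))` is conditionally negative definite with `Σ ξ(x) ℓ(x) ≥ 2ε`.
By Schoenberg's theorem every `exp (-t ℓ)` is positive definite, hence nonnegative on
`Σ²ℝ[Γ]`, so (2) makes `F t = Σ ξ(x) exp (-t ℓ(x))` nonnegative for `t > 0`; but `F 0 = 0` and
`F' 0 = -Σ ξ(x) ℓ(x) < 0`. Conversely, `ξ + ε = (ξ + ε/2 Δ_μ) + ε/2 (1 + μ)` with
`1 + μ ∈ Σ²ℝ[Γ]`.
-/

namespace PointedCone

variable {E : Type*} [AddCommGroup E] [Module ℝ E]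

def boundedBy (C : PointedCone ℝ E) (u : E) : Submodule ℝ E where
  carrier := {y | ∃ r : ℝ, 0 ≤ r ∧ r • u - y ∈ C ∧ r • u + y ∈ C}
  zero_mem' := ⟨0, le_rfl, by simp⟩
  add_mem' := by
    rintro y z ⟨r, hr, hy₁, hy₂⟩ ⟨s, hs, hz₁, hz₂⟩
    refine ⟨r + s, add_nonneg hr hs, ?_, ?_⟩
    · convert add_mem hy₁ hz₁ using 1; module
    · convert add_mem hy₂ hz₂ using 1; module
  smul_mem' := by
    rintro c y ⟨r, hr, hy₁, hy₂⟩
    refine ⟨|c| * r, mul_nonneg (abs_nonneg c) hr, ?_⟩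
    rcases le_total 0 c with hc | hc
    · rw [abs_of_nonneg hc, mul_smul, ← smul_sub, ← smul_add]
      exact ⟨C.smul_mem hc hy₁, C.smul_mem hc hy₂⟩
    · rw [abs_of_nonpos hc, mul_smul]
      constructor
      · convert C.smul_mem (neg_nonneg.2 hc) hy₂ using 1; module
      · convert C.smul_mem (neg_nonneg.2 hc) hy₁ using 1; module

lemma mem_boundedBy_self (C : PointedCone ℝ E) {u : E} (hu : u ∈ C) : u ∈ C.boundedBy u :=
  ⟨1, zero_le_one, by simp, by simpa using add_mem hu hu⟩

theorem exists_dual_of_forall_mem_boundedBy (C : PointedCone ℝ E) {u p : E} (hu : u ∈ C)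
    (hunit : ∀ y, y ∈ C.boundedBy u) (hp : p ∉ C) :
    ∃ g : E →ₗ[ℝ] ℝ, (∀ x ∈ C, 0 ≤ g x) ∧ g u = 1 ∧ g p ≤ 0 := by
  have hu0 : u ≠ 0 := by
    rintro rfl
    obtain ⟨r, -, -, h⟩ := hunit p
    exact hp (by simpa using h)
  -- `p ∉ D`, hence `-u ∉ D`, so `c • u ↦ c` is nonnegative on `D`; its extension is `≤ 0` at `p`.
  let D : PointedCone ℝ E := C ⊔ PointedCone.hull ℝ {-p}
  have hpD : p ∉ D := by
    intro h
    obtain ⟨y, hy, z, hz, hyz⟩ := Submodule.mem_sup.1 h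
    obtain ⟨s, rfl⟩ := Submodule.mem_span_singleton.1 hz
    change y + (s : ℝ) • -p = p at hyz
    have hs : (0 : ℝ) < 1 + s := add_pos_of_pos_of_nonneg one_pos s.2
    apply hp
    convert C.smul_mem (inv_pos.2 hs).le hy using 1
    rw [eq_inv_smul_iff₀ hs.ne', ← sub_eq_zero, ← neg_eq_zero, ← sub_eq_zero_of_eq hyz]
    module
  let f : E →ₗ.[ℝ] ℝ := LinearPMap.mkSpanSingleton u 1 hu0
  have hf : ∀ x : f.domain, (x : E) ∈ D → 0 ≤ f x := by
    rintro ⟨x, hx⟩ hxD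
    obtain ⟨c, rfl⟩ := Submodule.mem_span_singleton.1 hx
    rw [LinearPMap.mkSpanSingleton'_apply, RingHom.id_apply, smul_eq_mul, mul_one]
    by_contra! hc
    have hnu : -u ∈ D := by
      convert D.smul_mem (inv_nonneg.2 (neg_nonneg.2 hc.le)) hxD using 1
      rw [smul_smul, inv_neg, neg_mul, inv_mul_cancel₀ hc.ne, neg_one_smul]
    obtain ⟨r, hr, -, h⟩ := hunit p
    exact hpD (by simpa using add_mem (le_sup_left (a := C) h) (D.smul_mem hr hnu))
  have hfD : ∀ y, ∃ x : f.domain, (x : E) + y ∈ D := by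
    intro y
    obtain ⟨r, -, -, h⟩ := hunit y
    exact ⟨⟨r • u, Submodule.smul_mem _ r (Submodule.mem_span_singleton_self u)⟩,
      le_sup_left (a := C) h⟩
  obtain ⟨g, hgf, hg⟩ := riesz_extension D f hf hfD
  refine ⟨g, fun x hx => hg x (le_sup_left (a := C) hx), ?_, ?_⟩
  · rw [hgf ⟨u, Submodule.mem_span_singleton_self u⟩, LinearPMap.mkSpanSingleton_apply]
  · have := hg (-p) (le_sup_right (a := C) (Submodule.subset_span rfl))
    rwa [map_neg, neg_nonneg] at this

theorem exists_dual_of_mem_boundedBy (C : PointedCone ℝ E) {u p : E} (hu : u ∈ C)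
    (hpu : p ∈ C.boundedBy u) (hp : p ∉ C) :
    ∃ g : E →ₗ[ℝ] ℝ, (∀ x ∈ C, x ∈ C.boundedBy u → 0 ≤ g x) ∧ g u = 1 ∧ g p ≤ 0 := by
  let B := C.boundedBy u
  let CB : PointedCone ℝ B := C.comap (B.subtype.restrictScalars _)
  obtain ⟨g, hg, hgu, hgp⟩ := CB.exists_dual_of_forall_mem_boundedBy
    (u := ⟨u, C.mem_boundedBy_self hu⟩) (p := ⟨p, hpu⟩) hu (fun ⟨_, r, hr, h⟩ => ⟨r, hr, h⟩) hp
  obtain ⟨G, hG⟩ := LinearMap.exists_extend g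
  have hGg (y : B) : G y = g y := LinearMap.congr_fun hG y
  exact ⟨G, fun x hx hxB => (hGg ⟨x, hxB⟩).symm ▸ hg _ hx, (hGg _).trans hgu, (hGg _).trans_le hgp⟩

end PointedCone

namespace Matrix.PosSemidef

variable {n : Type*}

lemma of_const_one : (Matrix.of fun _ _ : n => (1 : ℝ)).PosSemidef := by
  refine ⟨by ext; simp, fun x => ?_⟩
  have h : (x.sum fun i a => x.sum fun j b => star a * Matrix.of (fun _ _ : n => (1 : ℝ)) i j * b)
      = (x.sum fun _ a => a) * (x.sum fun _ a => a) := by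
    simp [Finsupp.sum, Finset.sum_mul_sum]
  exact h ▸ mul_self_nonneg _

lemma map_pow {A : Matrix n n ℝ} (hA : A.PosSemidef) (k : ℕ) : (A.map (· ^ k)).PosSemidef := by
  induction k with
  | zero => convert of_const_one (n := n) using 1; ext; simp
  | succ k ih =>
    have h : A.map (· ^ (k + 1)) = A.map (· ^ k) ⊙ A := by ext; simp [pow_succ]
    exact h ▸ ih.hadamard hA

lemma map_exp {A : Matrix n n ℝ} (hA : A.PosSemidef) : (A.map Real.exp).PosSemidef := by
  refine ⟨IsHermitian.ext_iff.2 fun i j => by simpa using congrArg Real.exp (hA.1.apply i j),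
    fun x => ?_⟩
  have h : HasSum (fun k => (x.sum fun i a => x.sum fun j b => star a * A.map (· ^ k) i j * b) /
      k.factorial) (x.sum fun i a => x.sum fun j b => star a * A.map Real.exp i j * b) := by
    simp only [Finsupp.sum, Finset.sum_div]
    refine hasSum_sum fun i _ => hasSum_sum fun j _ => ?_
    simp only [map_apply, star_trivial, Real.exp_eq_exp_ℝ]
    simpa only [mul_div_assoc', div_mul_eq_mul_div] using
      ((NormedSpace.expSeries_div_hasSum_exp (A i j)).mul_left (x i)).mul_right (x j)
  exact h.nonneg fun k => div_nonneg ((hA.map_pow k).2 x) (Nat.cast_nonneg _)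

lemma scale {A : Matrix n n ℝ} (hA : A.PosSemidef) (g : n → ℝ) :
    (Matrix.of fun i j => g i * A i j * g j).PosSemidef := by
  refine ⟨IsHermitian.ext_iff.2 fun i j => ?_, fun x => ?_⟩
  · have h := hA.1.apply i j
    simp only [star_trivial] at h
    simp only [of_apply, star_trivial, h]
    ring
  · have hsupp : (g • x).support ⊆ x.support := fun i hi => by
      simp_all [Finsupp.mem_support_iff]
    have hsum (f : n → ℝ → ℝ) (hf : ∀ i, f i 0 = 0) :
        (g • x).sum f = ∑ i ∈ x.support, f i ((g • x) i) :=
      Finsupp.sum_of_support_subset _ hsupp _ fun i _ => hf i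
    convert hA.2 (g • x) using 1
    rw [hsum _ (by simp)]
    refine Finset.sum_congr rfl fun i _ => ?_
    rw [hsum _ (by simp)]
    refine Finset.sum_congr rfl fun j _ => ?_
    simp only [of_apply, star_trivial, Finsupp.coe_pointwise_smul, smul_eq_mul, Pi.mul_apply]
    ring

end Matrix.PosSemidef

lemma HasDerivAt.nonneg_of_forall_le {F : ℝ → ℝ} {d a : ℝ} (hF : HasDerivAt F d a)
    (h : ∀ t > 0, F a ≤ F (a + t)) : 0 ≤ d :=
  ge_of_tendsto hF.tendsto_slope_zero_right (eventually_nhdsWithin_of_forall fun t ht =>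
    smul_nonneg (inv_nonneg.2 (le_of_lt ht)) (sub_nonneg.2 (h t ht)))

section Involution

variable {Γ : Type*} [Group Γ]

lemma astar_coeff (ξ : MonoidAlgebra ℝ Γ) (x : Γ) : (astar ξ).coeff x = ξ.coeff x⁻¹ := rfl

def astarₗ : MonoidAlgebra ℝ Γ →ₗ[ℝ] MonoidAlgebra ℝ Γ where
  toFun := astar
  map_add' ξ η := by ext x; simp [astar_coeff]
  map_smul' c ξ := by ext x; simp [astar_coeff]

lemma astar_zero : astar (0 : MonoidAlgebra ℝ Γ) = 0 := map_zero astarₗ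

lemma astar_add (ξ η : MonoidAlgebra ℝ Γ) : astar (ξ + η) = astar ξ + astar η :=
  map_add astarₗ ξ η

lemma astar_sub (ξ η : MonoidAlgebra ℝ Γ) : astar (ξ - η) = astar ξ - astar η :=
  map_sub astarₗ ξ η

lemma astar_smul (c : ℝ) (ξ : MonoidAlgebra ℝ Γ) : astar (c • ξ) = c • astar ξ :=
  map_smul astarₗ c ξ

lemma astar_sum {ι : Type*} (s : Finset ι) (f : ι → MonoidAlgebra ℝ Γ) :
    astar (∑ i ∈ s, f i) = ∑ i ∈ s, astar (f i) :=
  map_sum astarₗ f s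

lemma astar_single (x : Γ) (c : ℝ) : astar (single x c) = single x⁻¹ c := by
  apply MonoidAlgebra.coeff_injective
  exact Finsupp.equivMapDomain_single (Equiv.inv Γ) x c

lemma astar_one : astar (1 : MonoidAlgebra ℝ Γ) = 1 := by
  rw [MonoidAlgebra.one_def, astar_single, inv_one]

lemma astar_astar (ξ : MonoidAlgebra ℝ Γ) : astar (astar ξ) = ξ := by
  ext x; simp [astar_coeff]

lemma astar_mul (ξ η : MonoidAlgebra ℝ Γ) : astar (ξ * η) = astar η * astar ξ := by
  induction ξ using MonoidAlgebra.induction_linear with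
  | zero => simp [astar_zero]
  | add ξ₁ ξ₂ h₁ h₂ => rw [add_mul, astar_add, h₁, h₂, astar_add, mul_add]
  | single x a =>
    induction η using MonoidAlgebra.induction_linear with
    | zero => simp [astar_zero]
    | add η₁ η₂ h₁ h₂ => rw [mul_add, astar_add, h₁, h₂, astar_add, add_mul]
    | single y b => simp [astar_single, single_mul_single, mul_comm a]

lemma aug_single (x : Γ) (c : ℝ) : aug Γ (single x c) = c := by
  simp [aug, MonoidAlgebra.lift_single]

lemma one_sub_single_mem_augIdeal (x : Γ) :
    (1 : MonoidAlgebra ℝ Γ) - single x 1 ∈ augIdeal Γ := by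
  simp [augIdeal, aug_single]

end Involution

section Pairing

variable {Γ : Type*}

noncomputable def pair (f : Γ → ℝ) : MonoidAlgebra ℝ Γ →ₗ[ℝ] ℝ :=
  Finsupp.linearCombination ℝ f ∘ₗ (MonoidAlgebra.coeffLinearEquiv ℝ).toLinearMap

lemma pair_apply (f : Γ → ℝ) (η : MonoidAlgebra ℝ Γ) :
    pair f η = η.coeff.sum fun x a => a * f x := by
  simp [pair, MonoidAlgebra.coeffLinearEquiv, Finsupp.linearCombination_apply]

lemma pair_single (f : Γ → ℝ) (x : Γ) (c : ℝ) : pair f (single x c) = c * f x := by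
  simp [pair_apply, MonoidAlgebra.coeff_single]

lemma pair_one [Group Γ] (f : Γ → ℝ) : pair f 1 = f 1 := by
  rw [MonoidAlgebra.one_def, pair_single, one_mul]

lemma pair_const_one [Group Γ] : pair (fun _ => (1 : ℝ)) = (aug Γ).toLinearMap := by
  ext x
  simp [pair_single, aug_single]

lemma aug_eq_sum [Group Γ] (η : MonoidAlgebra ℝ Γ) :
    aug Γ η = ∑ x ∈ η.coeff.support, η.coeff x := by
  rw [← AlgHom.coe_toLinearMap, ← pair_const_one, pair_apply]
  simp [Finsupp.sum]

lemma hasDerivAt_pair_exp (ell : Γ → ℝ) (η : MonoidAlgebra ℝ Γ) :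
    HasDerivAt (fun t => pair (fun x => Real.exp (-t * ell x)) η) (-pair ell η) 0 := by
  simp only [pair_apply, Finsupp.sum, ← Finset.sum_neg_distrib]
  refine HasDerivAt.fun_sum fun x _ => ?_
  simpa using (((hasDerivAt_id (0 : ℝ)).neg.mul_const (ell x)).exp).const_mul (η.coeff x)

end Pairing

section SumsOfSquares

variable {Γ : Type*} [Group Γ]

def hermSqCone (V : Submodule ℝ (MonoidAlgebra ℝ Γ)) : PointedCone ℝ (MonoidAlgebra ℝ Γ) where
  carrier := {ξ | ∃ (n : ℕ) (f : Fin n → MonoidAlgebra ℝ Γ), (∀ i, f i ∈ V) ∧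
    ξ = ∑ i, astar (f i) * f i}
  zero_mem' := ⟨0, Fin.elim0, fun i => i.elim0, by simp⟩
  add_mem' := by
    rintro _ _ ⟨n, f, hf, rfl⟩ ⟨m, g, hg, rfl⟩
    refine ⟨n + m, Fin.append f g, Fin.addCases (by simpa using hf) (by simpa using hg), ?_⟩
    simp [Fin.sum_univ_add]
  smul_mem' := by
    rintro c _ ⟨n, f, hf, rfl⟩
    refine ⟨n, fun i => Real.sqrt c • f i, fun i => V.smul_mem _ (hf i), ?_⟩
    rw [Finset.smul_sum]
    refine Finset.sum_congr rfl fun i _ => ?_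
    rw [astar_smul, smul_mul_smul_comm, Real.mul_self_sqrt c.2]
    rfl

lemma mem_hermSqCone_augIdeal {ξ : MonoidAlgebra ℝ Γ} :
    ξ ∈ hermSqCone (augIdeal Γ) ↔ ξ ∈ SOSI Γ := Iff.rfl

lemma mem_hermSqCone_top {ξ : MonoidAlgebra ℝ Γ} : ξ ∈ hermSqCone ⊤ ↔ ξ ∈ SOS Γ := by
  simp [hermSqCone, SOS]

lemma astar_mul_self_mem_hermSqCone {V : Submodule ℝ (MonoidAlgebra ℝ Γ)}
    {ζ : MonoidAlgebra ℝ Γ} (hζ : ζ ∈ V) : astar ζ * ζ ∈ hermSqCone V :=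
  ⟨1, fun _ => ζ, fun _ => hζ, by simp⟩

lemma hermSqCone_mono {V V' : Submodule ℝ (MonoidAlgebra ℝ Γ)} (h : V ≤ V') :
    hermSqCone V ≤ hermSqCone V' := by
  rintro _ ⟨n, f, hf, rfl⟩
  exact ⟨n, f, fun i => h (hf i), rfl⟩

lemma hermSqCone_induction {V : Submodule ℝ (MonoidAlgebra ℝ Γ)}
    {P : MonoidAlgebra ℝ Γ → Prop} (hP : ∀ ζ ∈ V, P (astar ζ * ζ))
    (hadd : ∀ ξ η, P ξ → P η → P (ξ + η)) (hzero : P 0) {ξ : MonoidAlgebra ℝ Γ}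
    (hξ : ξ ∈ hermSqCone V) : P ξ := by
  obtain ⟨n, f, hf, rfl⟩ := hξ
  exact Finset.sum_induction _ P hadd hzero fun i _ => hP _ (hf i)

lemma mem_augIdeal_and_astar_eq_of_mem_hermSqCone {ξ : MonoidAlgebra ℝ Γ}
    (hξ : ξ ∈ hermSqCone (augIdeal Γ)) : ξ ∈ augIdeal Γ ∧ astar ξ = ξ := by
  refine hermSqCone_induction (P := fun ξ => ξ ∈ augIdeal Γ ∧ astar ξ = ξ)
    (fun ζ hζ => ⟨?_, ?_⟩) (fun ξ η h₁ h₂ => ⟨add_mem h₁.1 h₂.1, ?_⟩) ⟨zero_mem _, astar_zero⟩ hξ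
  · have hζ : aug Γ ζ = 0 := hζ
    simp [augIdeal, hζ]
  · rw [astar_mul, astar_astar]
  · rw [astar_add, h₁.2, h₂.2]

end SumsOfSquares

section Squares

variable {Γ : Type*} [Group Γ]

lemma astar_mul_self_one_add_smul_single (c : ℝ) (x : Γ) :
    astar (1 + c • single x 1) * (1 + c • single x 1)
      = (1 + c ^ 2) • (1 : MonoidAlgebra ℝ Γ) + c • (single x 1 + single x⁻¹ 1) := by
  simp only [astar_add, astar_one, astar_smul, astar_single, add_mul, mul_add, one_mul, mul_one,
    smul_mul_smul_comm, single_mul_single, inv_mul_cancel, ← MonoidAlgebra.one_def]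
  module

lemma sum_smul_single (η : MonoidAlgebra ℝ Γ) :
    ∑ x ∈ η.coeff.support, η.coeff x • (single x 1 : MonoidAlgebra ℝ Γ) = η := by
  simpa [Finsupp.sum] using η.sum_coeff_single

lemma sum_smul_single_inv (η : MonoidAlgebra ℝ Γ) :
    ∑ x ∈ η.coeff.support, η.coeff x • (single x⁻¹ 1 : MonoidAlgebra ℝ Γ) = astar η := by
  simp_rw [← astar_single, ← astar_smul, ← astar_sum, sum_smul_single]

lemma sum_smul_one (η : MonoidAlgebra ℝ Γ) :
    ∑ x ∈ η.coeff.support, η.coeff x • (1 : MonoidAlgebra ℝ Γ) = aug Γ η • 1 := by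
  rw [← Finset.sum_smul, aug_eq_sum]

lemma sum_smul_astar_mul_self (η : MonoidAlgebra ℝ Γ) (c : ℝ) :
    ∑ x ∈ η.coeff.support, η.coeff x • (astar (1 + c • single x 1) * (1 + c • single x 1))
      = ((1 + c ^ 2) * aug Γ η) • (1 : MonoidAlgebra ℝ Γ) + c • (η + astar η) := by
  have h : ∀ x, η.coeff x • (astar (1 + c • single x 1) * (1 + c • single x 1))
      = (1 + c ^ 2) • (η.coeff x • (1 : MonoidAlgebra ℝ Γ))
        + c • (η.coeff x • single x (1 : ℝ) + η.coeff x • single x⁻¹ (1 : ℝ)) :=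
    fun x => by rw [astar_mul_self_one_add_smul_single]; module
  simp_rw [h, Finset.sum_add_distrib, ← Finset.smul_sum, Finset.sum_add_distrib, sum_smul_one,
    sum_smul_single, sum_smul_single_inv, smul_smul]

end Squares

section OrderUnit

variable {Γ : Type*} [Group Γ]

structure IsSymmProb (μ : MonoidAlgebra ℝ Γ) : Prop where
  nonneg : ∀ x, 0 ≤ μ.coeff x
  symm : ∀ x, μ.coeff x⁻¹ = μ.coeff x
  sum_eq_one : ∑ x ∈ μ.coeff.support, μ.coeff x = 1

noncomputable def oneSubSq (x : Γ) : MonoidAlgebra ℝ Γ :=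
  astar (1 - single x 1) * (1 - single x 1)

lemma oneSubSq_mem (x : Γ) : oneSubSq x ∈ hermSqCone (augIdeal Γ) :=
  astar_mul_self_mem_hermSqCone (one_sub_single_mem_augIdeal x)

lemma one_add_neg_one_smul_single (x : Γ) :
    1 + (-1 : ℝ) • single x (1 : ℝ) = (1 : MonoidAlgebra ℝ Γ) - single x 1 := by
  rw [neg_one_smul, sub_eq_add_neg]

lemma oneSubSq_eq (x : Γ) :
    oneSubSq x = (2 : ℝ) • (1 : MonoidAlgebra ℝ Γ) - (single x 1 + single x⁻¹ 1) := by
  rw [oneSubSq, ← one_add_neg_one_smul_single, astar_mul_self_one_add_smul_single]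
  module

lemma oneSubSq_one : oneSubSq (1 : Γ) = 0 := by
  simp [oneSubSq, ← MonoidAlgebra.one_def]

lemma oneSubSq_inv (x : Γ) : oneSubSq x⁻¹ = oneSubSq x := by
  rw [oneSubSq_eq, oneSubSq_eq, inv_inv, add_comm (single x⁻¹ _)]

lemma sum_smul_oneSubSq (η : MonoidAlgebra ℝ Γ) :
    ∑ x ∈ η.coeff.support, η.coeff x • oneSubSq x
      = (2 * aug Γ η) • (1 : MonoidAlgebra ℝ Γ) - (η + astar η) := by
  simp_rw [oneSubSq, ← one_add_neg_one_smul_single, sum_smul_astar_mul_self]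
  module

lemma sum_smul_oneSubSq_of_mem_augIdeal {θ : MonoidAlgebra ℝ Γ} (hθ : θ ∈ augIdeal Γ)
    (hθ' : astar θ = θ) : ∑ x ∈ θ.coeff.support, θ.coeff x • oneSubSq x = (-2 : ℝ) • θ := by
  rw [sum_smul_oneSubSq, show aug Γ θ = 0 from hθ, hθ']
  module

lemma two_smul_oneSubSq_add_sub_oneSubSq_mul_mem (a b : Γ) :
    (2 : ℝ) • oneSubSq a + (2 : ℝ) • oneSubSq b - oneSubSq (a * b) ∈ hermSqCone (augIdeal Γ) := by
  set u : MonoidAlgebra ℝ Γ := 1 - single a 1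
  set v : MonoidAlgebra ℝ Γ := single a 1 - single (a * b) 1
  have hv : astar v * v = oneSubSq b := by
    have : v = single a 1 * (1 - single b 1) := by rw [mul_sub, mul_one, single_mul_single, one_mul]
    rw [this, astar_mul, astar_single, mul_assoc, ← mul_assoc (single a⁻¹ 1), single_mul_single,
      inv_mul_cancel, mul_one, ← MonoidAlgebra.one_def, one_mul, oneSubSq]
  have huv : u + v = 1 - single (a * b) 1 := by simp only [u, v]; abel
  have key : (2 : ℝ) • oneSubSq a + (2 : ℝ) • oneSubSq b - oneSubSq (a * b)
      = astar (u - v) * (u - v) := by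
    have hu : oneSubSq a = astar u * u := rfl
    have hab : oneSubSq (a * b) = astar (u + v) * (u + v) := by rw [huv]; rfl
    clear_value u v
    rw [hu, ← hv, hab, astar_add, astar_sub]
    simp only [two_smul]
    noncomm_ring
  rw [key]
  refine astar_mul_self_mem_hermSqCone (sub_mem (one_sub_single_mem_augIdeal a) ?_)
  simp [v, augIdeal, aug_single]

namespace IsSymmProb

variable {μ : MonoidAlgebra ℝ Γ}

lemma astar_eq (hμ : IsSymmProb μ) : astar μ = μ := by
  ext x; rw [astar_coeff, hμ.symm]

lemma aug_eq (hμ : IsSymmProb μ) : aug Γ μ = 1 := by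
  rw [aug_eq_sum, hμ.sum_eq_one]

lemma sum_smul_oneSubSq (hμ : IsSymmProb μ) :
    ∑ x ∈ μ.coeff.support, μ.coeff x • oneSubSq x = (2 : ℝ) • (1 - μ) := by
  rw [_root_.sum_smul_oneSubSq, hμ.aug_eq, hμ.astar_eq]
  module

lemma sum_smul_mem_hermSqCone (hμ : IsSymmProb μ) {V : Submodule ℝ (MonoidAlgebra ℝ Γ)}
    {ζ : Γ → MonoidAlgebra ℝ Γ} (hζ : ∀ x, ζ x ∈ V) :
    ∑ x ∈ μ.coeff.support, μ.coeff x • (astar (ζ x) * ζ x) ∈ hermSqCone V :=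
  Submodule.sum_mem _ fun x _ =>
    (hermSqCone V).smul_mem (hμ.nonneg x) (astar_mul_self_mem_hermSqCone (hζ x))

lemma one_sub_mem (hμ : IsSymmProb μ) : 1 - μ ∈ hermSqCone (augIdeal Γ) := by
  convert (hermSqCone _).smul_mem (inv_nonneg.2 zero_le_two)
    (hμ.sum_smul_mem_hermSqCone one_sub_single_mem_augIdeal) using 1
  change _ = (2 : ℝ)⁻¹ • ∑ x ∈ μ.coeff.support, μ.coeff x • oneSubSq x
  rw [hμ.sum_smul_oneSubSq, inv_smul_smul₀ two_ne_zero]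

lemma one_add_mem (hμ : IsSymmProb μ) : 1 + μ ∈ hermSqCone ⊤ := by
  convert (hermSqCone ⊤).smul_mem (inv_nonneg.2 zero_le_two)
    (hμ.sum_smul_mem_hermSqCone (ζ := fun x => 1 + (1 : ℝ) • single x 1) fun _ => trivial) using 1
  rw [sum_smul_astar_mul_self, hμ.aug_eq, hμ.astar_eq]
  module

lemma exists_smul_sub_oneSubSq_mem (hμ : IsSymmProb μ)
    (hgen : Subgroup.closure (μ.coeff.support : Set Γ) = ⊤) (x : Γ) :
    ∃ r : ℝ, 0 ≤ r ∧ r • (1 - μ) - oneSubSq x ∈ hermSqCone (augIdeal Γ) := by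
  classical
  set C := hermSqCone (augIdeal Γ)
  have hx : x ∈ Subgroup.closure (μ.coeff.support : Set Γ) := hgen ▸ Subgroup.mem_top x
  induction hx using Subgroup.closure_induction with
  | mem s hs =>
    have hμs : 0 < μ.coeff s := (hμ.nonneg s).lt_of_ne' (Finsupp.mem_support_iff.1 hs)
    have h : (2 : ℝ) • (1 - μ) - μ.coeff s • oneSubSq s ∈ C := by
      rw [← hμ.sum_smul_oneSubSq, ← Finset.add_sum_erase _ _ hs, add_sub_cancel_left]
      exact Submodule.sum_mem _ fun t _ => C.smul_mem (hμ.nonneg t) (oneSubSq_mem t)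
    refine ⟨2 / μ.coeff s, by positivity, ?_⟩
    convert C.smul_mem (inv_nonneg.2 hμs.le) h using 1
    simp only [smul_sub, smul_smul, inv_mul_cancel₀ hμs.ne', one_smul, div_eq_inv_mul]
  | one => exact ⟨0, le_rfl, by simp [oneSubSq_one]⟩
  | mul a b _ _ ha hb =>
    obtain ⟨r, hr, hra⟩ := ha
    obtain ⟨s, hs, hsb⟩ := hb
    refine ⟨2 * r + 2 * s, by positivity, ?_⟩
    convert add_mem (add_mem (C.smul_mem zero_le_two hra) (C.smul_mem zero_le_two hsb))
      (two_smul_oneSubSq_add_sub_oneSubSq_mul_mem a b) using 1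
    module
  | inv a _ ha => simpa [oneSubSq_inv] using ha

lemma mem_boundedBy (hμ : IsSymmProb μ) (hgen : Subgroup.closure (μ.coeff.support : Set Γ) = ⊤)
    {θ : MonoidAlgebra ℝ Γ} (hθ : θ ∈ augIdeal Γ) (hθ' : astar θ = θ) :
    θ ∈ (hermSqCone (augIdeal Γ)).boundedBy (1 - μ) := by
  have hx (x : Γ) : oneSubSq x ∈ (hermSqCone (augIdeal Γ)).boundedBy (1 - μ) := by
    obtain ⟨r, hr, h⟩ := hμ.exists_smul_sub_oneSubSq_mem hgen x
    refine ⟨r, hr, h, ?_⟩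
    convert add_mem h ((hermSqCone _).smul_mem zero_le_two (oneSubSq_mem x)) using 1
    module
  rw [← inv_smul_smul₀ (by norm_num : (-2 : ℝ) ≠ 0) θ,
    ← sum_smul_oneSubSq_of_mem_augIdeal hθ hθ']
  exact Submodule.smul_mem _ _ (Submodule.sum_mem _ fun x _ => Submodule.smul_mem _ _ (hx x))

end IsSymmProb

end OrderUnit

section Kernels

variable {Γ : Type*} [Group Γ]

def kernelMatrix (f : Γ → ℝ) : Matrix Γ Γ ℝ := Matrix.of fun x y => f (x⁻¹ * y)

lemma pair_astar (f : Γ → ℝ) (η : MonoidAlgebra ℝ Γ) :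
    pair f (astar η) = pair (fun x => f x⁻¹) η := by
  induction η using MonoidAlgebra.induction_linear with
  | zero => simp [astar_zero]
  | add η₁ η₂ h₁ h₂ => rw [astar_add, map_add, map_add, h₁, h₂]
  | single x c => rw [astar_single, pair_single, pair_single]

lemma pair_astar_mul_self (f : Γ → ℝ) (ζ : MonoidAlgebra ℝ Γ) :
    pair f (astar ζ * ζ)
      = ζ.coeff.sum fun x a => ζ.coeff.sum fun y b => star a * kernelMatrix f x y * b := by
  conv_lhs => rw [← sum_smul_single ζ]
  rw [astar_sum, Finset.sum_mul_sum, map_sum]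
  simp only [Finsupp.sum, map_sum]
  refine Finset.sum_congr rfl fun x _ => Finset.sum_congr rfl fun y _ => ?_
  rw [astar_smul, astar_single, smul_mul_smul_comm, single_mul_single, one_mul, map_smul,
    pair_single]
  simp [kernelMatrix]
  ring

lemma pair_nonneg_of_mem_hermSqCone_top {f : Γ → ℝ} (hf : (kernelMatrix f).PosSemidef)
    {σ : MonoidAlgebra ℝ Γ} (hσ : σ ∈ hermSqCone ⊤) : 0 ≤ pair f σ :=
  hermSqCone_induction (P := fun σ => 0 ≤ pair f σ)
    (fun ζ _ => pair_astar_mul_self f ζ ▸ hf.2 ζ.coeff)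
    (fun _ _ h₁ h₂ => (map_add (pair f) _ _).symm ▸ add_nonneg h₁ h₂) (by simp) hσ

/-- `ell` is a normalized conditionally negative definite function; in coefficients, the last
condition says `∑ c_x c_y ell (x⁻¹ y) ≤ 0` whenever `∑ c_x = 0`. -/
structure IsCondNegDef (ell : Γ → ℝ) : Prop where
  map_one : ell 1 = 0
  map_inv : ∀ x, ell x⁻¹ = ell x
  pair_nonpos : ∀ ζ ∈ augIdeal Γ, pair ell (astar ζ * ζ) ≤ 0

namespace IsCondNegDef

variable {ell : Γ → ℝ}

lemma posSemidef (h : IsCondNegDef ell) :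
    (Matrix.of fun x y => ell x + ell y - ell (x⁻¹ * y)).PosSemidef := by
  refine ⟨Matrix.IsHermitian.ext_iff.2 fun x y => ?_, fun c => ?_⟩
  · rw [star_trivial, Matrix.of_apply, Matrix.of_apply, ← h.map_inv (y⁻¹ * x)]
    simp only [mul_inv_rev, inv_inv]
    ring
  set ζ : MonoidAlgebra ℝ Γ := MonoidAlgebra.ofCoeff c
  set s := aug Γ ζ
  have hζ : ζ - s • 1 ∈ augIdeal Γ := by simp [augIdeal, s]
  have e1 : pair ell (astar (ζ - s • 1) * (ζ - s • 1))
      = pair ell (astar ζ * ζ) - 2 * s * pair ell ζ := by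
    simp only [astar_sub, astar_smul, astar_one, sub_mul, mul_sub, smul_mul_assoc, mul_smul_comm,
      one_mul, mul_one, map_sub, map_smul, pair_one, h.map_one, pair_astar, h.map_inv, smul_eq_mul]
    ring
  have e2 : (c.sum fun x a => c.sum fun y b =>
      star a * Matrix.of (fun x y => ell x + ell y - ell (x⁻¹ * y)) x y * b)
      = 2 * s * pair ell ζ - pair ell (astar ζ * ζ) := by
    rw [pair_astar_mul_self, pair_apply, show s = _ from aug_eq_sum ζ]
    simp only [ζ, Finsupp.sum, kernelMatrix, Matrix.of_apply, star_trivial, mul_sub, mul_add,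
      sub_mul, add_mul, Finset.sum_add_distrib, Finset.sum_sub_distrib, Finset.mul_sum,
      Finset.sum_mul]
    rw [sub_left_inj, Finset.sum_comm (f := fun x y => c x * ell y * c y), ← Finset.sum_add_distrib]
    refine Finset.sum_congr rfl fun x _ => ?_
    rw [← Finset.sum_add_distrib]
    exact Finset.sum_congr rfl fun y _ => by ring
  linarith [h.pair_nonpos _ hζ]

theorem posSemidef_kernelMatrix_exp (h : IsCondNegDef ell) {t : ℝ} (ht : 0 ≤ t) :
    (kernelMatrix fun x => Real.exp (-t * ell x)).PosSemidef := by
  convert ((h.posSemidef.smul ht).map_exp).scale (fun x => Real.exp (-t * ell x)) using 1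
  ext x y
  simp only [kernelMatrix, Matrix.of_apply, Matrix.map_apply, Matrix.smul_apply, smul_eq_mul,
    ← Real.exp_add]
  ring_nf

end IsCondNegDef

end Kernels

section Separation

variable {Γ : Type*} [Group Γ]

theorem IsSymmProb.exists_isCondNegDef_of_notMem {μ : MonoidAlgebra ℝ Γ} (hμ : IsSymmProb μ)
    (hgen : Subgroup.closure (μ.coeff.support : Set Γ) = ⊤) {p : MonoidAlgebra ℝ Γ}
    (hp : p ∈ augIdeal Γ) (hp' : astar p = p) (hpC : p ∉ hermSqCone (augIdeal Γ)) :
    ∃ ell : Γ → ℝ, IsCondNegDef ell ∧ 0 ≤ pair ell p ∧ pair ell (1 - μ) = -2 := by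
  obtain ⟨ψ, hψC, hψu, hψp⟩ := (hermSqCone (augIdeal Γ)).exists_dual_of_mem_boundedBy
    hμ.one_sub_mem (hμ.mem_boundedBy hgen hp hp') hpC
  set ell : Γ → ℝ := fun x => ψ (oneSubSq x)
  have hpair (θ : MonoidAlgebra ℝ Γ) (hθ : θ ∈ augIdeal Γ) (hθ' : astar θ = θ) :
      pair ell θ = -2 * ψ θ := by
    rw [← smul_eq_mul, ← map_smul, ← sum_smul_oneSubSq_of_mem_augIdeal hθ hθ', map_sum, pair_apply]
    simp [Finsupp.sum, ell]
  obtain ⟨hΔ, hΔ'⟩ := mem_augIdeal_and_astar_eq_of_mem_hermSqCone hμ.one_sub_mem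
  refine ⟨ell, ⟨by simp [ell, oneSubSq_one], fun x => by simp [ell, oneSubSq_inv], fun ζ hζ => ?_⟩,
    ?_, ?_⟩
  · have hσ := astar_mul_self_mem_hermSqCone hζ
    obtain ⟨hσ₁, hσ₂⟩ := mem_augIdeal_and_astar_eq_of_mem_hermSqCone hσ
    rw [hpair _ hσ₁ hσ₂]
    linarith [hψC _ hσ (hμ.mem_boundedBy hgen hσ₁ hσ₂)]
  · rw [hpair p hp hp']
    linarith
  · rw [hpair _ hΔ hΔ', hψu, mul_one]

lemma pair_nonpos_of_forall_pair_exp_nonneg {ell : Γ → ℝ} {η : MonoidAlgebra ℝ Γ}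
    (hη : η ∈ augIdeal Γ) (h : ∀ t > 0, 0 ≤ pair (fun x => Real.exp (-t * ell x)) η) :
    pair ell η ≤ 0 := by
  have h0 : pair (fun _ => (1 : ℝ)) η = 0 := by
    rw [pair_const_one]
    exact hη
  have := (hasDerivAt_pair_exp ell η).nonneg_of_forall_le fun t ht => by simpa [h0] using h t ht
  linarith

lemma pair_nonneg_of_forall_add_smul_one_mem {f : Γ → ℝ} (hf : (kernelMatrix f).PosSemidef)
    {η : MonoidAlgebra ℝ Γ} (h : ∀ δ : ℝ, δ > 0 → η + δ • 1 ∈ hermSqCone ⊤) : 0 ≤ pair f η := by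
  have hf1 : 0 ≤ f 1 := by simpa [kernelMatrix] using hf.diag_nonneg (i := 1)
  refine le_of_forall_pos_le_add fun ε hε => ?_
  have hδ : 0 < ε / (f 1 + 1) := by positivity
  have h₁ := pair_nonneg_of_mem_hermSqCone_top hf (h _ hδ)
  rw [map_add, map_smul, pair_one, smul_eq_mul] at h₁
  have h₂ : ε / (f 1 + 1) * f 1 ≤ ε := by
    rw [div_mul_eq_mul_div, div_le_iff₀ (by positivity)]
    nlinarith
  linarith

end Separation

/-- the closure of `Σ²I[Γ]` equals `I[Γ] ∩ closure(Σ²ℝ[Γ])`. -/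
theorem stmt6 {Γ : Type*} [Group Γ]
    (μ : MonoidAlgebra ℝ Γ) (hpos : ∀ x : Γ, 0 ≤ μ.coeff x) (hsymm : ∀ x : Γ, μ.coeff x⁻¹ = μ.coeff x)
    (hprob : ∑ x ∈ μ.coeff.support, μ.coeff x = 1)
    (hgen : Subgroup.closure (μ.coeff.support : Set Γ) = ⊤)
    (ξ : MonoidAlgebra ℝ Γ) (hξ : ξ ∈ augIdeal Γ) (hherm : astar ξ = ξ) :
    (∀ ε : ℝ, 0 < ε → ξ + ε • (1 - μ) ∈ SOSI Γ) ↔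
    (∀ ε : ℝ, 0 < ε → ξ + ε • (1 : MonoidAlgebra ℝ Γ) ∈ SOS Γ) := by
  have hμ : IsSymmProb μ := ⟨hpos, hsymm, hprob⟩
  obtain ⟨hΔ, hΔ'⟩ := mem_augIdeal_and_astar_eq_of_mem_hermSqCone hμ.one_sub_mem
  constructor
  · intro h ε hε
    have hsplit : ξ + ε • (1 : MonoidAlgebra ℝ Γ)
        = (ξ + (ε / 2) • (1 - μ)) + (ε / 2) • (1 + μ) := by module
    rw [← mem_hermSqCone_top, hsplit]
    exact add_mem (hermSqCone_mono le_top (mem_hermSqCone_augIdeal.2 (h _ (half_pos hε))))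
      ((hermSqCone ⊤).smul_mem (half_pos hε).le hμ.one_add_mem)
  · intro h ε hε
    rw [← mem_hermSqCone_augIdeal]
    by_contra hp
    obtain ⟨ell, hell, hp₀, hΔ₂⟩ := hμ.exists_isCondNegDef_of_notMem hgen
      (add_mem hξ (Submodule.smul_mem _ ε hΔ)) (by rw [astar_add, astar_smul, hherm, hΔ']) hp
    rw [map_add, map_smul, hΔ₂, smul_eq_mul] at hp₀
    have := pair_nonpos_of_forall_pair_exp_nonneg hξ fun t ht =>
      pair_nonneg_of_forall_add_smul_one_mem (hell.posSemidef_kernelMatrix_exp ht.le)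
        fun δ hδ => mem_hermSqCone_top.2 (h δ hδ)
    linarith
end

section
/- Let Γ be a group. Then the two natural positive cones of the hermitian part of the augmentation ideal coincide: I[Γ] ∩ Σ²ℝ[Γ] = Σ²I[Γ]. In particular, if ξ ∈ ℝ[Γ] is a finite sum of hermitian squares ξ = Σᵢ ηᵢ*ηᵢ with ηᵢ ∈ ℝ[Γ], and Σ_x ξ(x) = 0, then ξ can be written as a finite sum ξ = Σⱼ ζⱼ*ζⱼ with every ζⱼ ∈ I[Γ]. -/
open MonoidAlgebra Finset RealInnerProductSpace

/-! The augmentation is a real character with `aug (η*) = aug η`, so it sends the hermitian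
square `η*η` to `(aug η)²`. A sum of real squares vanishes only if every term does, hence a sum
of hermitian squares lies in `I[Γ]` exactly when each of the squared elements does. -/

section

variable {Γ : Type*} [Group Γ]

lemma mem_augIdeal_iff (ξ : MonoidAlgebra ℝ Γ) : ξ ∈ augIdeal Γ ↔ aug Γ ξ = 0 :=
  LinearMap.mem_ker

lemma aug_astar (η : MonoidAlgebra ℝ Γ) : aug Γ (astar η) = aug Γ η := by
  simp [aug, astar, MonoidAlgebra.lift_apply, Finsupp.sum_equivMapDomain]

lemma aug_astar_mul_self (η : MonoidAlgebra ℝ Γ) : aug Γ (astar η * η) = aug Γ η ^ 2 := by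
  rw [map_mul, aug_astar, sq]

lemma sum_astar_mul_self_mem_augIdeal_iff {ι : Type*} (s : Finset ι)
    (f : ι → MonoidAlgebra ℝ Γ) :
    ∑ i ∈ s, astar (f i) * f i ∈ augIdeal Γ ↔ ∀ i ∈ s, f i ∈ augIdeal Γ := by
  simp only [mem_augIdeal_iff, map_sum, aug_astar_mul_self]
  rw [Finset.sum_eq_zero_iff_of_nonneg fun i _ => sq_nonneg _]
  simp only [sq_eq_zero_iff]

theorem augIdeal_inter_SOS_eq_SOSI : (augIdeal Γ : Set (MonoidAlgebra ℝ Γ)) ∩ SOS Γ = SOSI Γ := by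
  ext ξ
  constructor
  · rintro ⟨hξ, n, f, rfl⟩
    exact ⟨n, f, fun i => (sum_astar_mul_self_mem_augIdeal_iff _ f).1 hξ i (mem_univ i), rfl⟩
  · rintro ⟨n, f, hf, rfl⟩
    exact ⟨(sum_astar_mul_self_mem_augIdeal_iff _ f).2 fun i _ => hf i, n, f, rfl⟩

end

/-- `I[Γ] ∩ Σ²ℝ[Γ] = Σ²I[Γ]`. -/
theorem stmt8 {Γ : Type*} [Group Γ] :
    ((augIdeal Γ : Set (MonoidAlgebra ℝ Γ)) ∩ SOS Γ = SOSI Γ) ∧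
    (∀ ξ : MonoidAlgebra ℝ Γ, ξ ∈ SOS Γ → ξ ∈ augIdeal Γ →
      ∃ (m : ℕ) (ζ : Fin m → MonoidAlgebra ℝ Γ),
        (∀ j, ζ j ∈ augIdeal Γ) ∧ ξ = ∑ j, astar (ζ j) * ζ j) :=
  ⟨augIdeal_inter_SOS_eq_SOSI, fun ξ hSOS hI =>
    (augIdeal_inter_SOS_eq_SOSI.subset ⟨hI, hSOS⟩ : ξ ∈ SOSI Γ)⟩
end
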